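/- The Riesz representation map Ψ : L^2(T) → Ê defined by Ψ(f)(g) = T(fg) restricts to a bijection between the positive cone of L^2(T) and the positive cone of Ê; consequently Ψ and Ψ^{-1} are lattice isomorphisms: Ψ(f)^± = Ψ(f^±), Ψ(f ∨ g) = Ψ(f) ∨ Ψ(g) and Ψ(f ∧ g) = Ψ(f) ∧ Ψ(g) for all f, g ∈ L^2(T). -/

import Mathlib

/-!
Common setup.  `E` models the universal completion `E_u` of the `T`-universally
complete Riesz space `L¹(T)`: a Dedekind complete (conditionally complete)
`f`-algebra whose multiplicative unit `1 = e = Te` is a weak order unit.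
`T : E → E` models the strictly positive conditional expectation operator,
`L1 ⊆ E` its natural domain `L¹(T)`, `L2 L1` the space `L²(T)` and `RT T` the
range `R(T)` of `T`.
-/

variable {E : Type*}

/-- The range `R(T)` of the conditional expectation operator. -/
def RT (T : E → E) : Set E := Set.range T

/-- `L²(T) = {f ∈ L¹(T) : f² ∈ L¹(T)}`, the product taken in the `f`-algebra `E_u`. -/
def L2 [Mul E] (L1 : Set E) : Set E := {f | f ∈ L1 ∧ f * f ∈ L1}

variable [CommRing E] [ConditionallyCompleteLattice E]

/-- `T` is a strictly positive conditional expectation operator on the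
`T`-universally complete space `L¹(T)` (modelled by the set `L1` inside the
Dedekind complete `f`-algebra `E`), with `1 = e = Te` a weak order unit. -/
structure IsCondExp (T : E → E) (L1 : Set E) : Prop where
  /-- compatibility of the order with addition -/
  addLe : ∀ a b c : E, a ≤ b → a + c ≤ b + c
  /-- products of positive elements are positive -/
  mulPos : ∀ a b : E, 0 ≤ a → 0 ≤ b → 0 ≤ a * b
  /-- the `f`-algebra property -/
  fAlg : ∀ a b c : E, a ⊓ b = 0 → 0 ≤ c → (c * a) ⊓ b = 0
  /-- `1 = e` is a weak order unit -/
  weakUnit : ∀ x : E, 0 ≤ x → x ⊓ 1 = 0 → x = 0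
  /-- `T` is additive -/
  addT : ∀ a b : E, T (a + b) = T a + T b
  /-- `T` is positive -/
  posT : ∀ a : E, 0 ≤ a → 0 ≤ T a
  /-- `T` is strictly positive -/
  strictT : ∀ a : E, 0 ≤ a → T a = 0 → a = 0
  /-- `T` is a projection -/
  projT : ∀ a : E, T (T a) = T a
  /-- `T` maps the weak order unit `e = 1` to itself -/
  unitT : T 1 = 1
  /-- `T` is an averaging operator: `T(T a · b) = T a · T b` -/
  avgT : ∀ a b : E, T (T a * b) = T a * T b
  /-- `T` is order continuous -/
  ordContT : ∀ S : Set E, S.Nonempty → DirectedOn (· ≥ ·) S → (∀ x ∈ S, 0 ≤ x) →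
      IsGLB S 0 → IsGLB (T '' S) 0
  /-- `L¹(T)` is closed under addition -/
  l1add : ∀ a ∈ L1, ∀ b ∈ L1, a + b ∈ L1
  /-- `L¹(T)` is solid -/
  l1sol : ∀ a ∈ L1, ∀ b : E, |b| ≤ |a| → b ∈ L1
  /-- `R(T) ⊆ L¹(T)` and `T` maps `L¹(T)` into itself -/
  rtL1 : ∀ a : E, T a ∈ L1
  /-- `L²(T)` is an `R(T)`-module -/
  l2mod : ∀ α ∈ RT T, ∀ x ∈ L2 L1, α * x ∈ L2 L1
  /-- `T`-universal completeness of `L¹(T)` -/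
  tuc : ∀ S : Set E, S.Nonempty → (∀ x ∈ S, 0 ≤ x ∧ x ∈ L1) → DirectedOn (· ≤ ·) S →
      BddAbove (T '' S) → BddAbove S ∧ sSup S ∈ L1

/-- `sqrt` is a square-root function on the positive cone of the `f`-algebra. -/
def IsSqrt (sqrt : E → E) : Prop := ∀ a : E, 0 ≤ a → 0 ≤ sqrt a ∧ sqrt a * sqrt a = a

/-- The `R(T)`-valued norm `‖f‖_{T,2} = (T (f²))^{1/2}` on `L²(T)`. -/
def nrm (T : E → E) (sqrt : E → E) (f : E) : E := sqrt (T (f * f))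

/-- A `T`-linear functional on `E = L²(T)`: `R(T)`-valued, additive,
`R(T)`-homogeneous and order bounded.  The set of these is the `T`-dual `E*`. -/
def TLinear (T : E → E) (L1 : Set E) (F : E → E) : Prop :=
  (∀ x ∈ L2 L1, F x ∈ RT T) ∧
  (∀ x ∈ L2 L1, ∀ y ∈ L2 L1, F (x + y) = F x + F y) ∧
  (∀ α ∈ RT T, ∀ x ∈ L2 L1, F (α * x) = α * F x) ∧
  (∀ x ∈ L2 L1, 0 ≤ x → ∃ b : E, ∀ y ∈ L2 L1, |y| ≤ x → |F y| ≤ b)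

/-- `T`-strong boundedness: `|F x| ≤ k ‖x‖_{T,2}` for some `k ∈ R(T)₊`. -/
def StronglyBdd (T : E → E) (L1 : Set E) (sqrt : E → E) (F : E → E) : Prop :=
  ∃ k ∈ RT T, 0 ≤ k ∧ ∀ x ∈ L2 L1, |F x| ≤ k * nrm T sqrt x

/-- Membership in the `T`-strong dual `Ê` of `L²(T)`. -/
def MemEhat (T : E → E) (L1 : Set E) (sqrt : E → E) (F : E → E) : Prop :=
  TLinear T L1 F ∧ StronglyBdd T L1 sqrt F

/-- The Riesz representation map `Ψ(f)(g) = T (f g)`. -/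
def Psi (T : E → E) (f : E) : E → E := fun g => T (f * g)

/-- The Riesz–Kantorovich set `{F y + G z : y, z ∈ L²(T)₊, y + z = x}` whose
supremum is `(F ∨ G)(x)` and whose infimum is `(F ∧ G)(x)`. -/
def RKset (L1 : Set E) (F G : E → E) (x : E) : Set E :=
  {v | ∃ y z : E, y ∈ L2 L1 ∧ z ∈ L2 L1 ∧ 0 ≤ y ∧ 0 ≤ z ∧ y + z = x ∧ v = F y + G z}

/-- The partial order on functionals: `F ≤ G` iff `F x ≤ G x` for all `x ∈ L²(T)₊`. -/
def leF [Mul E] (L1 : Set E) (F G : E → E) : Prop := ∀ x ∈ L2 L1, 0 ≤ x → F x ≤ G x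

/-!
Positivity is tested against `f⁻`: if `T (f g) ≥ 0` for all `g ≥ 0`, then
`T ((f⁻)²) = -T (f f⁻) ≤ 0`, so `(f⁻)² = 0` by strict positivity of `T`, and `f⁻ = 0`
because a Dedekind complete `f`-algebra is Archimedean, hence semiprime.

Writing `f ⊔ g = f + (g - f)⁺` reduces the Riesz–Kantorovich formula to
`T (h⁺ x) = sup {T (h z) : 0 ≤ z ≤ x}`. The supremum is approached along
`z_n = x ⊓ n h⁺`: `T (h⁺ x) - T (h z_n) = T (h⁺ (x - n h⁺)⁺)` and `n h⁺ (x - n h⁺)⁺ ≤ x²`,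
so these terms decrease to `0` and order continuity of `T` concludes. Infima follow by
negation, and `f^±` are the cases `g = 0`.
-/

open Set

theorem nonpos_of_forall_nsmul_le {α : Type*} [AddCommGroup α] [ConditionallyCompleteLattice α]
    [IsOrderedAddMonoid α] {a b : α} (h : ∀ n : ℕ, n • a ≤ b) : a ≤ 0 := by
  have hbdd : BddAbove (range fun n : ℕ => n • a) := ⟨b, forall_mem_range.2 h⟩
  have hs : sSup (range fun n : ℕ => n • a) ≤ sSup (range fun n : ℕ => n • a) - a :=
    csSup_le (range_nonempty _) <| forall_mem_range.2 fun n => le_sub_iff_add_le.2 <| by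
      simpa [succ_nsmul] using le_csSup hbdd (mem_range_self (n + 1))
  simpa using hs

theorem RKset_neg (L1 : Set E) (F G : E → E) (x : E) :
    RKset L1 (fun y => -F y) (fun y => -G y) x = -RKset L1 F G x := by
  ext v
  simp only [RKset, Set.mem_neg, Set.mem_ofPred_eq, neg_eq_iff_eq_neg, neg_add]

namespace IsCondExp

variable {T : E → E} {L1 : Set E}

theorem isOrderedAddMonoid (hT : IsCondExp T L1) : IsOrderedAddMonoid E :=
  { add_le_add_left := fun a b h c => hT.addLe a b c h }

theorem posPart_mul_negPart (hT : IsCondExp T L1) (a : E) : a⁺ * a⁻ = 0 := by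
  have := hT.isOrderedAddMonoid
  have h := hT.fAlg a⁻ (a⁻ * a⁺) a⁺
    (by rw [inf_comm]; exact hT.fAlg _ _ _ (posPart_inf_negPart_eq_zero a) (negPart_nonneg a))
    (posPart_nonneg a)
  rwa [mul_comm a⁻, inf_idem] at h

theorem posPart_mul_self (hT : IsCondExp T L1) (a : E) : a⁺ * a = a⁺ * a⁺ := by
  have := hT.isOrderedAddMonoid
  linear_combination (-a⁺) * posPart_sub_negPart a - hT.posPart_mul_negPart a

theorem mul_self_nonneg (hT : IsCondExp T L1) (a : E) : 0 ≤ a * a := by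
  have := hT.isOrderedAddMonoid
  have hsq : a * a = a⁺ * a⁺ + a⁻ * a⁻ := by
    linear_combination (-(a + a⁺ - a⁻)) * posPart_sub_negPart a - 2 * hT.posPart_mul_negPart a
  rw [hsq]
  exact add_nonneg (hT.mulPos _ _ (posPart_nonneg a) (posPart_nonneg a))
    (hT.mulPos _ _ (negPart_nonneg a) (negPart_nonneg a))

theorem isOrderedRing (hT : IsCondExp T L1) : IsOrderedRing E := by
  have := hT.isOrderedAddMonoid
  have : ZeroLEOneClass E := ⟨by simpa using hT.mul_self_nonneg 1⟩
  exact IsOrderedRing.of_mul_nonneg hT.mulPos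

theorem eq_zero_of_mul_self_eq_zero (hT : IsCondExp T L1) {a : E} (ha : 0 ≤ a) (h : a * a = 0) :
    a = 0 := by
  have := hT.isOrderedAddMonoid
  refine le_antisymm (nonpos_of_forall_nsmul_le (b := 1) fun n => ?_) ha
  have hsq : (1 - n • a) * (1 - n • a) = 1 - (n • a + n • a) := by
    rw [nsmul_eq_mul]
    linear_combination ((n : E) * n) * h
  have h2 := hT.mul_self_nonneg (1 - n • a)
  rw [hsq, sub_nonneg] at h2
  exact (le_add_of_nonneg_left (nsmul_nonneg ha n)).trans h2

theorem map_zero (hT : IsCondExp T L1) : T 0 = 0 := (AddMonoidHom.mk' T hT.addT).map_zero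

theorem map_neg (hT : IsCondExp T L1) (a : E) : T (-a) = -T a :=
  (AddMonoidHom.mk' T hT.addT).map_neg a

theorem map_sub (hT : IsCondExp T L1) (a b : E) : T (a - b) = T a - T b :=
  (AddMonoidHom.mk' T hT.addT).map_sub a b

theorem monotone (hT : IsCondExp T L1) : Monotone T := fun a b hab => by
  have := hT.isOrderedAddMonoid
  simpa [hT.map_sub] using hT.posT (b - a) (sub_nonneg.2 hab)

theorem mem_L2_of_le (hT : IsCondExp T L1) {x a : E} (hx : x ∈ L2 L1) (ha : 0 ≤ a)
    (hax : a ≤ x) : a ∈ L2 L1 := by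
  have := hT.isOrderedRing
  have hx0 := ha.trans hax
  refine ⟨hT.l1sol x hx.1 a ?_, hT.l1sol (x * x) hx.2 (a * a) ?_⟩
  · rwa [abs_of_nonneg ha, abs_of_nonneg hx0]
  · rw [abs_of_nonneg (mul_nonneg ha ha), abs_of_nonneg (mul_nonneg hx0 hx0)]
    exact mul_le_mul hax hax ha hx0

theorem abs_mul_abs_self (hT : IsCondExp T L1) (a : E) : |a| * |a| = a * a := by
  have := hT.isOrderedAddMonoid
  rw [← posPart_add_negPart]
  linear_combination 4 * hT.posPart_mul_negPart a + (a⁺ - a⁻ + a) * posPart_sub_negPart a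

theorem abs_mem_L2 (hT : IsCondExp T L1) {f : E} (hf : f ∈ L2 L1) : |f| ∈ L2 L1 := by
  have := hT.isOrderedAddMonoid
  exact ⟨hT.l1sol f hf.1 |f| (abs_abs f).le, by rw [hT.abs_mul_abs_self]; exact hf.2⟩

theorem negPart_mem_L2 (hT : IsCondExp T L1) {f : E} (hf : f ∈ L2 L1) : f⁻ ∈ L2 L1 := by
  have := hT.isOrderedAddMonoid
  refine hT.mem_L2_of_le (hT.abs_mem_L2 hf) (negPart_nonneg f) ?_
  rw [← posPart_add_negPart]
  exact le_add_of_nonneg_left (posPart_nonneg f)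

theorem nonneg_iff_leF_Psi (hT : IsCondExp T L1) {f : E} (hf : f ∈ L2 L1) :
    0 ≤ f ↔ leF L1 (fun _ => 0) (Psi T f) := by
  have := hT.isOrderedRing
  refine ⟨fun hf0 x _ hx0 => hT.posT _ (mul_nonneg hf0 hx0), fun hle => ?_⟩
  have hsq0 : 0 ≤ f⁻ * f⁻ := mul_nonneg (negPart_nonneg f) (negPart_nonneg f)
  have hTsq : T (f⁻ * f⁻) = 0 := by
    have hmul : f * f⁻ = -(f⁻ * f⁻) := by
      linear_combination (-f⁻) * posPart_sub_negPart f + hT.posPart_mul_negPart f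
    have h := hle f⁻ (hT.negPart_mem_L2 hf) (negPart_nonneg f)
    simp only [Psi, hmul, hT.map_neg, neg_nonneg] at h
    exact le_antisymm h (hT.posT _ hsq0)
  exact negPart_eq_zero.1
    (hT.eq_zero_of_mul_self_eq_zero (negPart_nonneg f) (hT.strictT _ hsq0 hTsq))

theorem isGLB_range_mul_posPart_sub_nsmul (hT : IsCondExp T L1) {p x : E} (hp : 0 ≤ p)
    (hx : 0 ≤ x) : IsGLB (range fun n : ℕ => p * (x - n • p)⁺) 0 := by
  have := hT.isOrderedRing
  refine ⟨forall_mem_range.2 fun n => mul_nonneg hp (posPart_nonneg _), fun c hc => ?_⟩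
  refine (le_posPart c).trans (nonpos_of_forall_nsmul_le (b := x * x) fun n => ?_)
  have hw := hT.posPart_mul_self (x - n • p)
  set w := (x - n • p)⁺
  have hwx : w ≤ x :=
    (posPart_mono (sub_le_self x (nsmul_nonneg hp n))).trans (posPart_eq_self.2 hx).le
  calc n • c⁺ ≤ n • (p * w) :=
        nsmul_le_nsmul_right (sup_le (hc (mem_range_self n)) (mul_nonneg hp (posPart_nonneg _))) n
    _ = x * w - w * w := by linear_combination -hw
    _ ≤ x * w := sub_le_self _ (mul_nonneg (posPart_nonneg _) (posPart_nonneg _))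
    _ ≤ x * x := mul_le_mul_of_nonneg_left hwx hx

theorem mul_inf_nsmul_posPart (hT : IsCondExp T L1) {h x : E} (hx : 0 ≤ x) (n : ℕ) :
    h * (x ⊓ n • h⁺) = h⁺ * x - h⁺ * (x - n • h⁺)⁺ := by
  have := hT.isOrderedRing
  have hneg : h⁻ * (x ⊓ n • h⁺) = 0 := by
    refine le_antisymm ?_ (mul_nonneg (negPart_nonneg h)
      (le_inf hx (nsmul_nonneg (posPart_nonneg h) n)))
    calc h⁻ * (x ⊓ n • h⁺) ≤ h⁻ * (n • h⁺) :=
          mul_le_mul_of_nonneg_left inf_le_right (negPart_nonneg h)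
      _ = 0 := by rw [mul_smul_comm, mul_comm, hT.posPart_mul_negPart, smul_zero]
  rw [inf_eq_sub_posPart_sub] at hneg ⊢
  linear_combination -hneg - (x - (x - n • h⁺)⁺) * posPart_sub_negPart h

theorem map_posPart_mul_le (hT : IsCondExp T L1) {h x c : E} (hx2 : x ∈ L2 L1) (hx0 : 0 ≤ x)
    (hc : ∀ z ∈ L2 L1, 0 ≤ z → z ≤ x → T (h * z) ≤ c) : T (h⁺ * x) ≤ c := by
  have := hT.isOrderedRing
  set u : ℕ → E := fun n => h⁺ * (x - n • h⁺)⁺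
  have hanti : Antitone u := fun m n hmn => mul_le_mul_of_nonneg_left
    (posPart_mono (sub_le_sub_left (nsmul_le_nsmul_left (posPart_nonneg h) hmn) x))
    (posPart_nonneg h)
  have hglb : IsGLB (T '' range u) 0 :=
    hT.ordContT _ (range_nonempty u) (directedOn_range.2 hanti.directed_ge)
      (forall_mem_range.2 fun n => mul_nonneg (posPart_nonneg h) (posPart_nonneg _))
      (hT.isGLB_range_mul_posPart_sub_nsmul (posPart_nonneg h) hx0)
  have hlb : T (h⁺ * x) - c ∈ lowerBounds (T '' range u) := by
    rintro _ ⟨_, ⟨n, rfl⟩, rfl⟩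
    have hz0 : 0 ≤ x ⊓ n • h⁺ := le_inf hx0 (nsmul_nonneg (posPart_nonneg h) n)
    have hTz := hc _ (hT.mem_L2_of_le hx2 hz0 inf_le_left) hz0 inf_le_left
    rw [hT.mul_inf_nsmul_posPart hx0, hT.map_sub] at hTz
    exact sub_le_comm.1 hTz
  exact sub_nonpos.1 (hglb.2 hlb)

theorem Psi_zero (hT : IsCondExp T L1) : Psi T 0 = fun _ => 0 :=
  funext fun y => by simp only [Psi, zero_mul, hT.map_zero]

theorem Psi_neg (hT : IsCondExp T L1) (f : E) : Psi T (-f) = fun y => -Psi T f y :=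
  funext fun y => by simp only [Psi, neg_mul, hT.map_neg]

theorem isLUB_RKset_Psi_sup (hT : IsCondExp T L1) (f g : E) {x : E} (hx2 : x ∈ L2 L1)
    (hx0 : 0 ≤ x) : IsLUB (RKset L1 (Psi T f) (Psi T g) x) (Psi T (f ⊔ g) x) := by
  have := hT.isOrderedRing
  refine ⟨?_, fun b hb => ?_⟩
  · rintro _ ⟨y, z, -, -, hy0, hz0, rfl, rfl⟩
    calc T (f * y) + T (g * z) ≤ T ((f ⊔ g) * y) + T ((f ⊔ g) * z) :=
          add_le_add (hT.monotone (mul_le_mul_of_nonneg_right le_sup_left hy0))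
            (hT.monotone (mul_le_mul_of_nonneg_right le_sup_right hz0))
      _ = T ((f ⊔ g) * (y + z)) := by rw [mul_add, hT.addT]
  · have hkey : T ((g - f)⁺ * x) ≤ b - T (f * x) := hT.map_posPart_mul_le hx2 hx0
      fun z hz2 hz0 hzx => by
        have hy0 : 0 ≤ x - z := sub_nonneg.2 hzx
        rw [le_sub_iff_add_le']
        calc T (f * x) + T ((g - f) * z) = Psi T f (x - z) + Psi T g z := by
              simp only [Psi, mul_sub, sub_mul, hT.map_sub]; abel
          _ ≤ b := hb ⟨x - z, z, hT.mem_L2_of_le hx2 hy0 (sub_le_self x hz0), hz2, hy0, hz0,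
              sub_add_cancel x z, rfl⟩
    calc Psi T (f ⊔ g) x = T (f * x) + T ((g - f)⁺ * x) := by
          rw [Psi, sup_comm, sup_eq_add_posPart_sub, add_mul, hT.addT]
      _ ≤ b := le_sub_iff_add_le'.1 hkey

theorem isGLB_RKset_Psi_inf (hT : IsCondExp T L1) (f g : E) {x : E} (hx2 : x ∈ L2 L1)
    (hx0 : 0 ≤ x) : IsGLB (RKset L1 (Psi T f) (Psi T g) x) (Psi T (f ⊓ g) x) := by
  have := hT.isOrderedAddMonoid
  have h := hT.isLUB_RKset_Psi_sup (-f) (-g) hx2 hx0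
  rwa [hT.Psi_neg, hT.Psi_neg, RKset_neg, ← neg_inf, hT.Psi_neg, isLUB_neg, neg_neg] at h

end IsCondExp

theorem stmt8_general (T : E → E) (L1 : Set E) (hT : IsCondExp T L1) :
    -- `Ψ` maps `E₊` onto `Ê₊` (being already a bijection of `E` onto `Ê`)
    (∀ f ∈ L2 L1, (0 ≤ f ↔ leF L1 (fun _ => 0) (Psi T f))) ∧
    -- `Ψ(f ∨ g) = Ψ(f) ∨ Ψ(g)` and `Ψ(f ∧ g) = Ψ(f) ∧ Ψ(g)`
    (∀ f ∈ L2 L1, ∀ g ∈ L2 L1, ∀ x ∈ L2 L1, 0 ≤ x →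
      IsLUB (RKset L1 (Psi T f) (Psi T g) x) (Psi T (f ⊔ g) x) ∧
      IsGLB (RKset L1 (Psi T f) (Psi T g) x) (Psi T (f ⊓ g) x)) ∧
    -- `Ψ(f⁺) = Ψ(f)⁺ = Ψ(f) ∨ 0` and `Ψ(f⁻) = Ψ(f)⁻ = (-Ψ(f)) ∨ 0`
    (∀ f ∈ L2 L1, ∀ x ∈ L2 L1, 0 ≤ x →
      IsLUB (RKset L1 (Psi T f) (fun _ => 0) x) (Psi T (f ⊔ 0) x) ∧
      IsLUB (RKset L1 (fun y => -(Psi T f y)) (fun _ => 0) x) (Psi T ((-f) ⊔ 0) x)) := by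
  refine ⟨fun f hf => hT.nonneg_iff_leF_Psi hf,
    fun f _ g _ x hx2 hx0 =>
      ⟨hT.isLUB_RKset_Psi_sup f g hx2 hx0, hT.isGLB_RKset_Psi_inf f g hx2 hx0⟩,
    fun f _ x hx2 hx0 => ⟨?_, ?_⟩⟩
  · simpa only [hT.Psi_zero] using hT.isLUB_RKset_Psi_sup f 0 hx2 hx0
  · simpa only [hT.Psi_zero, hT.Psi_neg] using hT.isLUB_RKset_Psi_sup (-f) 0 hx2 hx0

/-- The Riesz representation map `Ψ(f)(g) = T(fg)` restricts to a
bijection between the positive cones of `L²(T)` and `Ê`, and is a lattice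
isomorphism: `Ψ(f ∨ g) = Ψ(f) ∨ Ψ(g)`, `Ψ(f ∧ g) = Ψ(f) ∧ Ψ(g)` and
`Ψ(f^±) = Ψ(f)^±` (with the Riesz–Kantorovich lattice operations on `Ê`). -/
theorem stmt8 (T : E → E) (L1 : Set E) (hT : IsCondExp T L1)
    (sqrt : E → E) (hsqrt : IsSqrt sqrt) :
    -- `Ψ` maps `E₊` onto `Ê₊` (being already a bijection of `E` onto `Ê`)
    (∀ f ∈ L2 L1, (0 ≤ f ↔ leF L1 (fun _ => 0) (Psi T f))) ∧
    -- `Ψ(f ∨ g) = Ψ(f) ∨ Ψ(g)` and `Ψ(f ∧ g) = Ψ(f) ∧ Ψ(g)`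
    (∀ f ∈ L2 L1, ∀ g ∈ L2 L1, ∀ x ∈ L2 L1, 0 ≤ x →
      IsLUB (RKset L1 (Psi T f) (Psi T g) x) (Psi T (f ⊔ g) x) ∧
      IsGLB (RKset L1 (Psi T f) (Psi T g) x) (Psi T (f ⊓ g) x)) ∧
    -- `Ψ(f⁺) = Ψ(f)⁺ = Ψ(f) ∨ 0` and `Ψ(f⁻) = Ψ(f)⁻ = (-Ψ(f)) ∨ 0`
    (∀ f ∈ L2 L1, ∀ x ∈ L2 L1, 0 ≤ x →
      IsLUB (RKset L1 (Psi T f) (fun _ => 0) x) (Psi T (f ⊔ 0) x) ∧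
      IsLUB (RKset L1 (fun y => -(Psi T f y)) (fun _ => 0) x) (Psi T ((-f) ⊔ 0) x)) :=
  stmt8_general T L1 hT
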